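/- arXiv:2002.06900 — 8 statements merged into one kernel-verified Lean document; each statement's English description precedes it below -/
import Mathlib

section
/- Let (u_0, λ_0) and (u_1, λ_1) be the first and second eigenpairs of -u'' + V u = λ u on (-1,1) with Robin boundary conditions u'(±1) = ∓α u(±1), where λ_0 < λ_1, u_0 > 0 on (-1,1), and u_1 has exactly one interior zero and is positive near x = -1. Then the ratio u_1/u_0 is strictly monotonically decreasing on [-1,1]. -/
open Set

/-!
The Wronskian `W = u₁' u₀ - u₁ u₀'` satisfies `W' = (λ₀ - λ₁) u₀ u₁` and vanishes at `±1` by the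
Robin conditions. As `u₁` is positive to the left of its zero and negative to the right of it, `W`
first decreases and then increases, so `W < 0` inside and `(u₁ / u₀)' = W / u₀² < 0`.
Both this sign pattern of `u₁` and the positivity of `u₀` up to the boundary rest on uniqueness for
`u'' = (V - λ) u`: a solution vanishing together with its derivative at one point vanishes
identically.
-/

lemma IsPreconnected.forall_lt_of_forall_ne {X α : Type*} [TopologicalSpace X] [LinearOrder α]
    [TopologicalSpace α] [OrderClosedTopology α] {s : Set X} (hs : IsPreconnected s)
    {f : X → α} (hf : ContinuousOn f s) {c : α} (hne : ∀ x ∈ s, f x ≠ c) {a : X} (ha : a ∈ s)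
    (hfa : c < f a) : ∀ x ∈ s, c < f x := by
  intro x hx
  by_contra! hxc
  obtain ⟨y, hy, hyc⟩ := hs.intermediate_value hx ha hf ⟨hxc, hfa.le⟩
  exact hne y hy hyc

lemma lipschitzWith_snd_mul_fst (r : ℝ) :
    LipschitzWith (max 1 ‖r‖₊) (fun y : ℝ × ℝ => (y.2, r * y.1)) := by
  simpa only [smul_eq_mul, mul_one, Function.comp_def] using
    LipschitzWith.prod_snd.prodMk
      ((lipschitzWith_smul (β := ℝ) r).comp (LipschitzWith.prod_fst (α := ℝ) (β := ℝ)))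

lemma eqOn_zero_of_eq_zero_of_deriv_eq_zero {g u u' : ℝ → ℝ} {a b c : ℝ}
    (hg : ContinuousOn g (Icc a b))
    (hu : ∀ x ∈ Icc a b, HasDerivWithinAt u (u' x) (Icc a b) x)
    (hu' : ∀ x ∈ Icc a b, HasDerivWithinAt u' (g x * u x) (Icc a b) x)
    (hc : c ∈ Icc a b) (hu0 : u c = 0) (hu'0 : u' c = 0) :
    EqOn u 0 (Icc a b) := by
  obtain ⟨C, hC⟩ := isCompact_Icc.exists_bound_of_continuousOn hg
  set v : ℝ → ℝ × ℝ → ℝ × ℝ := fun t y => (y.2, g t * y.1)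
  have hv : ∀ t ∈ Icc a b, LipschitzOnWith (max 1 C.toNNReal) (v t) univ := fun t ht =>
    ((lipschitzWith_snd_mul_fst (g t)).weaken
      (max_le_max le_rfl (NNReal.le_toNNReal_of_coe_le (hC t ht)))).lipschitzOnWith
  set f : ℝ → ℝ × ℝ := fun x => (u x, u' x)
  have hf : ∀ x ∈ Icc a b, HasDerivWithinAt f (v x (f x)) (Icc a b) x := fun x hx =>
    (hu x hx).prodMk (hu' x hx)
  have hfc : ContinuousOn f (Icc a b) := fun x hx => (hf x hx).continuousWithinAt
  have h0 : ∀ x, HasDerivWithinAt (fun _ => (0 : ℝ × ℝ)) (v x 0) (Icc a b) x := fun x =>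
    (hasDerivWithinAt_const x _ _).congr_deriv (by simp [v]; rfl)
  have hfc0 : f c = 0 := by simp [f, hu0, hu'0]
  have hleft : EqOn f (fun _ => 0) (Icc a c) := by
    have hsub : Icc a c ⊆ Icc a b := Icc_subset_Icc_right hc.2
    have hnhds : ∀ t ∈ Ioc a c, Icc a b ∈ nhdsWithin t (Iic t) := fun t ht =>
      Icc_mem_nhdsLE_of_mem ⟨ht.1, ht.2.trans hc.2⟩
    exact ODE_solution_unique_of_mem_Icc_left (s := fun _ => univ)
      (fun t ht => hv t (hsub (Ioc_subset_Icc_self ht))) (hfc.mono hsub)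
      (fun t ht => (hf t (hsub (Ioc_subset_Icc_self ht))).mono_of_mem_nhdsWithin (hnhds t ht))
      (fun _ _ => mem_univ _) continuousOn_const
      (fun t ht => (h0 t).mono_of_mem_nhdsWithin (hnhds t ht)) (fun _ _ => mem_univ _) hfc0
  have hright : EqOn f (fun _ => 0) (Icc c b) := by
    have hsub : Icc c b ⊆ Icc a b := Icc_subset_Icc_left hc.1
    have hnhds : ∀ t ∈ Ico c b, Icc a b ∈ nhdsWithin t (Ici t) := fun t ht =>
      Icc_mem_nhdsGE_of_mem ⟨hc.1.trans ht.1, ht.2⟩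
    exact ODE_solution_unique_of_mem_Icc_right (s := fun _ => univ)
      (fun t ht => hv t (hsub (Ico_subset_Icc_self ht))) (hfc.mono hsub)
      (fun t ht => (hf t (hsub (Ico_subset_Icc_self ht))).mono_of_mem_nhdsWithin (hnhds t ht))
      (fun _ _ => mem_univ _) continuousOn_const
      (fun t ht => (h0 t).mono_of_mem_nhdsWithin (hnhds t ht)) (fun _ _ => mem_univ _) hfc0
  intro x hx
  rcases le_total x c with hxc | hxc
  · exact congrArg Prod.fst (hleft ⟨hx.1, hxc⟩)
  · exact congrArg Prod.fst (hright ⟨hxc, hx.2⟩)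

lemma forall_mem_Icc_pos_of_robin {g u u' : ℝ → ℝ} {a b α β : ℝ} (hab : a < b)
    (hg : ContinuousOn g (Icc a b))
    (hu : ∀ x ∈ Icc a b, HasDerivWithinAt u (u' x) (Icc a b) x)
    (hu' : ∀ x ∈ Icc a b, HasDerivWithinAt u' (g x * u x) (Icc a b) x)
    (hα : u' a = α * u a) (hβ : u' b = β * u b) (hpos : ∀ x ∈ Ioo a b, 0 < u x) :
    ∀ x ∈ Icc a b, 0 < u x := by
  have hm : (a + b) / 2 ∈ Ioo a b := ⟨by linarith, by linarith⟩
  have hcauchy : ∀ x ∈ Icc a b, u x = 0 → u' x ≠ 0 := fun x hx h0 h1 =>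
    (hpos _ hm).ne' (eqOn_zero_of_eq_zero_of_deriv_eq_zero hg hu hu' hx h0 h1
      (Ioo_subset_Icc_self hm))
  refine isPreconnected_Icc.forall_lt_of_forall_ne (fun x hx => (hu x hx).continuousWithinAt)
    ?_ (Ioo_subset_Icc_self hm) (hpos _ hm)
  intro x hx hx0
  rcases eq_endpoints_or_mem_Ioo_of_mem_Icc hx with rfl | rfl | hx'
  · exact hcauchy x hx hx0 (by rw [hα, hx0, mul_zero])
  · exact hcauchy x hx hx0 (by rw [hβ, hx0, mul_zero])
  · exact (hpos x hx').ne' hx0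

lemma forall_mem_Ioo_pos_of_pos_near_left {u : ℝ → ℝ} {a c : ℝ}
    (hu : ContinuousOn u (Ioo a c)) (hne : ∀ x ∈ Ioo a c, u x ≠ 0)
    (hnear : ∃ ε > 0, ∀ x ∈ Ioo a (a + ε), 0 < u x) : ∀ x ∈ Ioo a c, 0 < u x := by
  obtain ⟨ε, hε, hpos⟩ := hnear
  intro x hx
  obtain ⟨y, hy, hyx⟩ := ((Filter.eventually_of_mem (Ioo_mem_nhdsGT (lt_add_of_pos_right a hε))
    hpos).and (Ioo_mem_nhdsGT hx.1)).exists
  exact isPreconnected_Ioo.forall_lt_of_forall_ne hu hne ⟨hyx.1, hyx.2.trans hx.2⟩ hy x hx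

/-- Past a zero with a sign change on its left, `u` cannot turn positive again: otherwise the zero
is a minimum, so `u'` vanishes there as well and `u ≡ 0`. -/
lemma forall_mem_Ioo_neg_of_pos_left {g u u' : ℝ → ℝ} {a b c : ℝ}
    (hg : ContinuousOn g (Icc a b))
    (hu : ∀ x ∈ Icc a b, HasDerivWithinAt u (u' x) (Icc a b) x)
    (hu' : ∀ x ∈ Icc a b, HasDerivWithinAt u' (g x * u x) (Icc a b) x)
    (hc : c ∈ Ioo a b) (huc : u c = 0) (hne : ∀ x ∈ Ioo c b, u x ≠ 0)
    (hleft : ∀ x ∈ Ioo a c, 0 < u x) : ∀ x ∈ Ioo c b, u x < 0 := by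
  have hcont : ContinuousOn u (Icc a b) := fun y hy => (hu y hy).continuousWithinAt
  intro x hx
  refine (hne x hx).lt_of_le (not_lt.mp fun hxpos => ?_)
  have hright : ∀ y ∈ Ioo c b, 0 < u y := isPreconnected_Ioo.forall_lt_of_forall_ne
    (hcont.mono (Ioo_subset_Icc_self.trans (Icc_subset_Icc hc.1.le le_rfl))) hne hx hxpos
  have hmin : IsLocalMin u c := Filter.eventually_of_mem (Ioo_mem_nhds hc.1 hc.2) fun y hy => by
    rcases lt_trichotomy y c with hyc | rfl | hyc
    · exact huc ▸ (hleft y ⟨hy.1, hyc⟩).le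
    · exact le_rfl
    · exact huc ▸ (hright y ⟨hyc, hy.2⟩).le
  have hu'c : u' c = 0 :=
    hmin.hasDerivAt_eq_zero ((hu c (Ioo_subset_Icc_self hc)).hasDerivAt (Icc_mem_nhds hc.1 hc.2))
  have hx' : x ∈ Icc a b := ⟨hc.1.trans hx.1 |>.le, hx.2.le⟩
  exact hxpos.ne' (eqOn_zero_of_eq_zero_of_deriv_eq_zero hg hu hu' (Ioo_subset_Icc_self hc) huc
    hu'c hx')

lemma hasDerivWithinAt_of_schrodinger {V u u' u'' : ℝ → ℝ} {lam : ℝ} {s : Set ℝ}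
    (hu' : ∀ x ∈ s, HasDerivWithinAt u' (u'' x) s x)
    (heq : ∀ x ∈ s, -u'' x + V x * u x = lam * u x) :
    ∀ x ∈ s, HasDerivWithinAt u' ((V x - lam) * u x) s x :=
  fun x hx => (hu' x hx).congr_deriv (by linear_combination -heq x hx)

lemma HasDerivWithinAt.wronskian {u u' v v' : ℝ → ℝ} {s : Set ℝ} {x r lam mu : ℝ}
    (hu : HasDerivWithinAt u (u' x) s x) (hu' : HasDerivWithinAt u' ((r - lam) * u x) s x)
    (hv : HasDerivWithinAt v (v' x) s x) (hv' : HasDerivWithinAt v' ((r - mu) * v x) s x) :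
    HasDerivWithinAt (fun y => u' y * v y - u y * v' y) ((mu - lam) * (u x * v x)) s x :=
  ((hu'.mul hv).sub (hu.mul hv')).congr_deriv (by ring)

lemma forall_mem_Ioo_neg_of_deriv_neg_pos {f f' : ℝ → ℝ} {a b c : ℝ} (hc : c ∈ Icc a b)
    (hf : ∀ x ∈ Icc a b, HasDerivWithinAt f (f' x) (Icc a b) x) (ha : f a = 0) (hb : f b = 0)
    (hneg : ∀ x ∈ Ioo a c, f' x < 0) (hpos : ∀ x ∈ Ioo c b, 0 < f' x) :
    ∀ x ∈ Ioo a b, f x < 0 := by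
  have hcont : ContinuousOn f (Icc a b) := fun x hx => (hf x hx).continuousWithinAt
  have hderiv : ∀ {p q}, Icc p q ⊆ Icc a b →
      ∀ x ∈ interior (Icc p q), HasDerivWithinAt f (f' x) (interior (Icc p q)) x :=
    fun hsub x hx => (hf x (hsub (interior_subset hx))).mono (interior_subset.trans hsub)
  have hanti : StrictAntiOn f (Icc a c) := by
    have hsub : Icc a c ⊆ Icc a b := Icc_subset_Icc_right hc.2
    exact strictAntiOn_of_hasDerivWithinAt_neg (convex_Icc a c) (hcont.mono hsub) (hderiv hsub)
      (by simpa only [interior_Icc] using hneg)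
  have hmono : StrictMonoOn f (Icc c b) := by
    have hsub : Icc c b ⊆ Icc a b := Icc_subset_Icc_left hc.1
    exact strictMonoOn_of_hasDerivWithinAt_pos (convex_Icc c b) (hcont.mono hsub) (hderiv hsub)
      (by simpa only [interior_Icc] using hpos)
  intro x hx
  rcases le_total x c with hxc | hxc
  · exact ha ▸ hanti ⟨le_rfl, hc.1⟩ ⟨hx.1.le, hxc⟩ hx.1
  · exact hb ▸ hmono ⟨hxc, hx.2.le⟩ ⟨hc.2, le_rfl⟩ hx.2

lemma strictAntiOn_div_of_wronskian_neg {u u' v v' : ℝ → ℝ} {a b : ℝ}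
    (hu : ∀ x ∈ Icc a b, HasDerivWithinAt u (u' x) (Icc a b) x)
    (hv : ∀ x ∈ Icc a b, HasDerivWithinAt v (v' x) (Icc a b) x)
    (hvpos : ∀ x ∈ Icc a b, 0 < v x) (hW : ∀ x ∈ Ioo a b, u' x * v x - u x * v' x < 0) :
    StrictAntiOn (fun x => u x / v x) (Icc a b) := by
  refine strictAntiOn_of_hasDerivWithinAt_neg (convex_Icc a b)
    (f' := fun x => (u' x * v x - u x * v' x) / v x ^ 2)
    (fun x hx => ((hu x hx).div (hv x hx) (hvpos x hx).ne').continuousWithinAt) ?_ ?_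
  · intro x hx
    rw [interior_Icc] at hx ⊢
    have hx' := Ioo_subset_Icc_self hx
    exact ((hu x hx').div (hv x hx') (hvpos x hx').ne').mono Ioo_subset_Icc_self
  · intro x hx
    rw [interior_Icc] at hx
    exact div_neg_of_neg_of_pos (hW x hx) (pow_pos (hvpos x (Ioo_subset_Icc_self hx)) 2)

theorem ratio_monotone
    (V : ℝ → ℝ) (hV : ContinuousOn V (Icc (-1:ℝ) 1))
    (α lam0 lam1 : ℝ) (hlam : lam0 < lam1)
    (u0 u0' u0'' u1 u1' u1'' : ℝ → ℝ)
    (hu0d1 : ∀ x ∈ Icc (-1:ℝ) 1, HasDerivWithinAt u0 (u0' x) (Icc (-1:ℝ) 1) x)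
    (hu0d2 : ∀ x ∈ Icc (-1:ℝ) 1, HasDerivWithinAt u0' (u0'' x) (Icc (-1:ℝ) 1) x)
    (hu1d1 : ∀ x ∈ Icc (-1:ℝ) 1, HasDerivWithinAt u1 (u1' x) (Icc (-1:ℝ) 1) x)
    (hu1d2 : ∀ x ∈ Icc (-1:ℝ) 1, HasDerivWithinAt u1' (u1'' x) (Icc (-1:ℝ) 1) x)
    (heq0 : ∀ x ∈ Icc (-1:ℝ) 1, -u0'' x + V x * u0 x = lam0 * u0 x)
    (heq1 : ∀ x ∈ Icc (-1:ℝ) 1, -u1'' x + V x * u1 x = lam1 * u1 x)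
    (hbc0R : u0' 1 = -α * u0 1) (hbc0L : u0' (-1) = α * u0 (-1))
    (hbc1R : u1' 1 = -α * u1 1) (hbc1L : u1' (-1) = α * u1 (-1))
    (hu0pos : ∀ x ∈ Ioo (-1:ℝ) 1, 0 < u0 x)
    -- u1 has exactly one interior zero and is positive near -1
    (x0 : ℝ) (hx0 : x0 ∈ Ioo (-1:ℝ) 1) (hx0z : u1 x0 = 0)
    (huniq : ∀ x ∈ Ioo (-1:ℝ) 1, u1 x = 0 → x = x0)
    (hnear : ∃ ε > 0, ∀ x ∈ Ioo (-1:ℝ) (-1 + ε), 0 < u1 x) :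
    StrictAntiOn (fun x => u1 x / u0 x) (Icc (-1:ℝ) 1) := by
  have hu0d2' := hasDerivWithinAt_of_schrodinger hu0d2 heq0
  have hu1d2' := hasDerivWithinAt_of_schrodinger hu1d2 heq1
  have hu0pos' : ∀ x ∈ Icc (-1:ℝ) 1, 0 < u0 x :=
    forall_mem_Icc_pos_of_robin (by norm_num) (hV.sub continuousOn_const) hu0d1 hu0d2' hbc0L
      hbc0R hu0pos
  have hu1c : ContinuousOn u1 (Icc (-1) 1) := fun x hx => (hu1d1 x hx).continuousWithinAt
  have hu1pos : ∀ x ∈ Ioo (-1) x0, 0 < u1 x := forall_mem_Ioo_pos_of_pos_near_left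
    (hu1c.mono (Ioo_subset_Icc_self.trans (Icc_subset_Icc_right hx0.2.le)))
    (fun x hx h => hx.2.ne (huniq x ⟨hx.1, hx.2.trans hx0.2⟩ h)) hnear
  have hu1neg : ∀ x ∈ Ioo x0 1, u1 x < 0 :=
    forall_mem_Ioo_neg_of_pos_left (hV.sub continuousOn_const) hu1d1 hu1d2' hx0 hx0z
      (fun x hx h => hx.1.ne' (huniq x ⟨hx0.1.trans hx.1, hx.2⟩ h)) hu1pos
  refine strictAntiOn_div_of_wronskian_neg hu1d1 hu0d1 hu0pos' ?_
  refine forall_mem_Ioo_neg_of_deriv_neg_pos (Ioo_subset_Icc_self hx0)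
    (fun x hx => (hu1d1 x hx).wronskian (hu1d2' x hx) (hu0d1 x hx) (hu0d2' x hx))
    (by rw [hbc1L, hbc0L]; ring) (by rw [hbc1R, hbc0R]; ring) ?_ ?_
  · exact fun x hx => mul_neg_of_neg_of_pos (sub_neg.2 hlam)
      (mul_pos (hu1pos x hx) (hu0pos x ⟨hx.1, hx.2.trans hx0.2⟩))
  · exact fun x hx => mul_pos_of_neg_of_neg (sub_neg.2 hlam)
      (mul_neg_of_neg_of_pos (hu1neg x hx) (hu0pos x ⟨hx0.1.trans hx.1, hx.2⟩))
end

section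
/- Let u_0 > 0 and u_1 be the first two eigenfunctions of -u'' + Vu = λu on (-1,1) with Robin boundary conditions, normalized by ∫ u_0^2 = ∫ u_1^2 = 1, with u_1/u_0 strictly decreasing on [-1,1] and u_1 having exactly one interior zero. Then the function ψ = u_1^2 - u_0^2 has at least one zero in (-1,1) and at most two zeros in [-1,1]; moreover there exist ξ_- < ξ_+ in [-1,1], at least one interior, such that ψ < 0 on (ξ_-, ξ_+) and ψ > 0 on [-1,1] \ [ξ_-, ξ_+]. -/
/-!
Write `r = u₁ / u₀`. Strict monotonicity of `r` forces `u₀ ≠ 0` on `[-1, 1]` (otherwise `r` would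
vanish twice), so `r` is continuous and `ψ = u₀² (r² - 1)` is negative exactly where `|r| < 1`.
If `|r| ≤ 1` at both endpoints, monotonicity gives `|r| < 1` inside, hence `∫ u₁² < ∫ u₀²`,
contradicting the normalization; so `r` crosses the level `1` or `-1` in the interior. The points
`ξ₋ < x₀ < ξ₊` where `r` crosses `1` and `-1` (or the endpoints, if it does not) split `[-1, 1]`.
-/

open Set intervalIntegral MeasureTheory

section Squares

variable {K : Type*} [Field K] [LinearOrder K] [IsStrictOrderedRing K] {a b : K}

theorem sq_lt_sq_iff_abs_div_lt_one (hb : b ≠ 0) : a ^ 2 < b ^ 2 ↔ |a / b| < 1 := by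
  rw [sq_lt_sq, abs_div, div_lt_one (abs_pos.2 hb)]

theorem sq_lt_sq_iff_one_lt_abs_div (hb : b ≠ 0) : b ^ 2 < a ^ 2 ↔ 1 < |a / b| := by
  rw [sq_lt_sq, abs_div, one_lt_div (abs_pos.2 hb)]

end Squares

def CrossesDownAt (r : ℝ → ℝ) (s : Set ℝ) (c ξ : ℝ) : Prop :=
  ∀ x ∈ s, (x < ξ → c < r x) ∧ (ξ < x → r x < c)

namespace StrictAntiOn

variable {r : ℝ → ℝ} {a b c : ℝ}

theorem exists_crossesDownAt (hr : StrictAntiOn r (Icc a b)) (hrc : ContinuousOn r (Icc a b))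
    (hab : a ≤ b) (c : ℝ) :
    ∃ ξ ∈ Icc a b, CrossesDownAt r (Icc a b) c ξ ∧ (a < ξ → c ≤ r ξ) ∧ (ξ < b → r ξ ≤ c) := by
  have ha : a ∈ Icc a b := left_mem_Icc.2 hab
  have hb : b ∈ Icc a b := right_mem_Icc.2 hab
  by_cases hca : r a ≤ c
  · refine ⟨a, ha, fun x hx => ⟨fun h => absurd hx.1 h.not_ge, fun h => (hr ha hx h).trans_le hca⟩,
      fun h => absurd h (lt_irrefl a), fun _ => hca⟩
  by_cases hcb : c ≤ r b
  · refine ⟨b, hb, fun x hx => ⟨fun h => hcb.trans_lt (hr hx hb h), fun h => absurd hx.2 h.not_ge⟩,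
      fun _ => hcb, fun h => absurd h (lt_irrefl b)⟩
  obtain ⟨ξ, hξ, rfl⟩ := intermediate_value_Icc' hab hrc ⟨(not_le.1 hcb).le, (not_le.1 hca).le⟩
  exact ⟨ξ, hξ, fun x hx => ⟨fun h => hr hx hξ h, fun h => hr hξ hx h⟩,
    fun _ => le_rfl, fun _ => le_rfl⟩

theorem exists_crossesDownAt_lt (hr : StrictAntiOn r (Icc a b)) (hrc : ContinuousOn r (Icc a b))
    {x₀ : ℝ} (hx₀ : x₀ ∈ Ioc a b) (hc : r x₀ < c) :
    ∃ ξ ∈ Icc a b, ξ < x₀ ∧ (c < r a → a < ξ) ∧ CrossesDownAt r (Icc a b) c ξ := by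
  obtain ⟨ξ, hξ, hcross, hleft, hright⟩ := hr.exists_crossesDownAt hrc (hx₀.1.le.trans hx₀.2) c
  have hξx₀ : ξ < x₀ := by
    refine lt_of_not_ge fun h => h.lt_or_eq.elim (fun h => ?_) fun h => ?_
    · exact (hcross x₀ (Ioc_subset_Icc_self hx₀)).1 h |>.not_gt hc
    · exact (hleft (h ▸ hx₀.1)).not_gt (h ▸ hc)
  refine ⟨ξ, hξ, hξx₀, fun hca => hξ.1.lt_of_ne fun h => ?_, hcross⟩
  exact (h ▸ hright (hξx₀.trans_le hx₀.2)).not_gt hca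

theorem exists_crossesDownAt_gt (hr : StrictAntiOn r (Icc a b)) (hrc : ContinuousOn r (Icc a b))
    {x₀ : ℝ} (hx₀ : x₀ ∈ Ico a b) (hc : c < r x₀) :
    ∃ ξ ∈ Icc a b, x₀ < ξ ∧ (r b < c → ξ < b) ∧ CrossesDownAt r (Icc a b) c ξ := by
  obtain ⟨ξ, hξ, hcross, hleft, hright⟩ := hr.exists_crossesDownAt hrc (hx₀.1.trans hx₀.2.le) c
  have hx₀ξ : x₀ < ξ := by
    refine lt_of_not_ge fun h => h.lt_or_eq.elim (fun h => ?_) fun h => ?_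
    · exact (hcross x₀ (Ico_subset_Icc_self hx₀)).2 h |>.not_gt hc
    · exact (hright (h ▸ hx₀.2)).not_gt (h ▸ hc)
  refine ⟨ξ, hξ, hx₀ξ, fun hcb => hξ.2.lt_of_ne fun h => ?_, hcross⟩
  exact (h ▸ hleft (hx₀.1.trans_lt hx₀ξ)).not_gt hcb

end StrictAntiOn

theorem one_lt_or_lt_neg_one_of_integral_sq_eq {f g : ℝ → ℝ} {a b : ℝ} (hab : a < b)
    (hf : ContinuousOn f (Icc a b)) (hg : ContinuousOn g (Icc a b))
    (hg0 : ∀ x ∈ Ioo a b, g x ≠ 0) (hfg : StrictAntiOn (fun x => f x / g x) (Icc a b))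
    (hint : ∫ x in a..b, f x ^ 2 = ∫ x in a..b, g x ^ 2) :
    1 < f a / g a ∨ f b / g b < -1 := by
  by_contra! hends
  have hlt : ∀ x ∈ Ioo a b, f x ^ 2 < g x ^ 2 := fun x hx =>
    (sq_lt_sq_iff_abs_div_lt_one (hg0 x hx)).2 <| abs_lt.2
      ⟨hends.2.trans_lt (hfg (Ioo_subset_Icc_self hx) (right_mem_Icc.2 hab.le) hx.2),
        (hfg (left_mem_Icc.2 hab.le) (Ioo_subset_Icc_self hx) hx.1).trans_le hends.1⟩
  have hf2 : IntervalIntegrable (fun x => f x ^ 2) volume a b :=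
    (hf.pow 2).intervalIntegrable_of_Icc hab.le
  have hg2 : IntervalIntegrable (fun x => g x ^ 2) volume a b :=
    (hg.pow 2).intervalIntegrable_of_Icc hab.le
  have hpos := intervalIntegral_pos_of_pos_on (hg2.sub hf2) (fun x hx => sub_pos.2 (hlt x hx)) hab
  rw [integral_sub hg2 hf2, hint, sub_self] at hpos
  exact lt_irrefl 0 hpos

theorem zeros_of_difference_general
    (u0 u0' u1 u1' : ℝ → ℝ)
    (hu0d1 : ∀ x ∈ Icc (-1:ℝ) 1, HasDerivWithinAt u0 (u0' x) (Icc (-1:ℝ) 1) x)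
    (hu1d1 : ∀ x ∈ Icc (-1:ℝ) 1, HasDerivWithinAt u1 (u1' x) (Icc (-1:ℝ) 1) x)
    (hu0pos : ∀ x ∈ Ioo (-1:ℝ) 1, 0 < u0 x)
    (hnorm0 : ∫ x in (-1:ℝ)..1, (u0 x) ^ 2 = 1)
    (hnorm1 : ∫ x in (-1:ℝ)..1, (u1 x) ^ 2 = 1)
    (hratio : StrictAntiOn (fun x => u1 x / u0 x) (Icc (-1:ℝ) 1))
    (x0 : ℝ) (hx0 : x0 ∈ Ioo (-1:ℝ) 1) (hx0z : u1 x0 = 0) :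
    ∃ ξm ξp : ℝ, ξm ∈ Icc (-1:ℝ) 1 ∧ ξp ∈ Icc (-1:ℝ) 1 ∧ ξm < ξp ∧
      (ξm ∈ Ioo (-1:ℝ) 1 ∨ ξp ∈ Ioo (-1:ℝ) 1) ∧
      (∀ x ∈ Ioo ξm ξp, (u1 x) ^ 2 - (u0 x) ^ 2 < 0) ∧
      (∀ x ∈ Icc (-1:ℝ) 1 \ Icc ξm ξp, 0 < (u1 x) ^ 2 - (u0 x) ^ 2) := by
  have hc0 : ContinuousOn u0 (Icc (-1) 1) := fun x hx => (hu0d1 x hx).continuousWithinAt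
  have hc1 : ContinuousOn u1 (Icc (-1) 1) := fun x hx => (hu1d1 x hx).continuousWithinAt
  have hr0 : u1 x0 / u0 x0 = 0 := by rw [hx0z, zero_div]
  have hu0ne : ∀ x ∈ Icc (-1:ℝ) 1, u0 x ≠ 0 := fun x hx h => by
    obtain rfl : x = x0 :=
      hratio.injOn hx (Ioo_subset_Icc_self hx0) (by simp only [h, div_zero, hr0])
    exact (hu0pos x hx0).ne' h
  have hrc := hc1.div hc0 hu0ne
  have hends := one_lt_or_lt_neg_one_of_integral_sq_eq (by norm_num) hc1 hc0
    (fun x hx => (hu0pos x hx).ne') hratio (hnorm1.trans hnorm0.symm)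
  obtain ⟨ξm, hξm, hξmx0, hξmL, hm⟩ :=
    hratio.exists_crossesDownAt_lt hrc (Ioo_subset_Ioc_self hx0) (c := 1) (by rw [hr0]; norm_num)
  obtain ⟨ξp, hξp, hx0ξp, hξpR, hp⟩ :=
    hratio.exists_crossesDownAt_gt hrc (Ioo_subset_Ico_self hx0) (c := -1) (by rw [hr0]; norm_num)
  refine ⟨ξm, ξp, hξm, hξp, hξmx0.trans hx0ξp, ?_, fun x hx => ?_, fun x ⟨hx, hxn⟩ => ?_⟩
  · exact hends.imp (fun h => ⟨hξmL h, hξmx0.trans hx0.2⟩) fun h => ⟨hx0.1.trans hx0ξp, hξpR h⟩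
  · have hxI : x ∈ Icc (-1:ℝ) 1 := ⟨hξm.1.trans hx.1.le, hx.2.le.trans hξp.2⟩
    exact sub_neg.2 <| (sq_lt_sq_iff_abs_div_lt_one (hu0ne x hxI)).2 <|
      abs_lt.2 ⟨(hp x hxI).1 hx.2, (hm x hxI).2 hx.1⟩
  · refine sub_pos.2 <| (sq_lt_sq_iff_one_lt_abs_div (hu0ne x hx)).2 ?_
    rcases lt_or_ge x ξm with h | h
    · exact ((hm x hx).1 h).trans_le (le_abs_self _)
    · exact lt_abs.2 (Or.inr (lt_neg.1 ((hp x hx).2 (lt_of_not_ge fun h' => hxn ⟨h, h'⟩))))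

theorem zeros_of_difference
    (V : ℝ → ℝ) (hV : ContinuousOn V (Icc (-1:ℝ) 1))
    (α lam0 lam1 : ℝ) (hlam : lam0 < lam1)
    (u0 u0' u0'' u1 u1' u1'' : ℝ → ℝ)
    (hu0d1 : ∀ x ∈ Icc (-1:ℝ) 1, HasDerivWithinAt u0 (u0' x) (Icc (-1:ℝ) 1) x)
    (hu0d2 : ∀ x ∈ Icc (-1:ℝ) 1, HasDerivWithinAt u0' (u0'' x) (Icc (-1:ℝ) 1) x)
    (hu1d1 : ∀ x ∈ Icc (-1:ℝ) 1, HasDerivWithinAt u1 (u1' x) (Icc (-1:ℝ) 1) x)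
    (hu1d2 : ∀ x ∈ Icc (-1:ℝ) 1, HasDerivWithinAt u1' (u1'' x) (Icc (-1:ℝ) 1) x)
    (heq0 : ∀ x ∈ Icc (-1:ℝ) 1, -u0'' x + V x * u0 x = lam0 * u0 x)
    (heq1 : ∀ x ∈ Icc (-1:ℝ) 1, -u1'' x + V x * u1 x = lam1 * u1 x)
    (hbc0R : u0' 1 = -α * u0 1) (hbc0L : u0' (-1) = α * u0 (-1))
    (hbc1R : u1' 1 = -α * u1 1) (hbc1L : u1' (-1) = α * u1 (-1))
    (hu0pos : ∀ x ∈ Ioo (-1:ℝ) 1, 0 < u0 x)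
    (hnorm0 : ∫ x in (-1:ℝ)..1, (u0 x) ^ 2 = 1)
    (hnorm1 : ∫ x in (-1:ℝ)..1, (u1 x) ^ 2 = 1)
    (hratio : StrictAntiOn (fun x => u1 x / u0 x) (Icc (-1:ℝ) 1))
    (x0 : ℝ) (hx0 : x0 ∈ Ioo (-1:ℝ) 1) (hx0z : u1 x0 = 0)
    (huniq : ∀ x ∈ Ioo (-1:ℝ) 1, u1 x = 0 → x = x0) :
    ∃ ξm ξp : ℝ, ξm ∈ Icc (-1:ℝ) 1 ∧ ξp ∈ Icc (-1:ℝ) 1 ∧ ξm < ξp ∧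
      (ξm ∈ Ioo (-1:ℝ) 1 ∨ ξp ∈ Ioo (-1:ℝ) 1) ∧
      (∀ x ∈ Ioo ξm ξp, (u1 x) ^ 2 - (u0 x) ^ 2 < 0) ∧
      (∀ x ∈ Icc (-1:ℝ) 1 \ Icc ξm ξp, 0 < (u1 x) ^ 2 - (u0 x) ^ 2) :=
  zeros_of_difference_general u0 u0' u1 u1' hu0d1 hu1d1 hu0pos hnorm0 hnorm1 hratio x0 hx0 hx0z
end

section
/- Suppose ψ : [-1,1] → ℝ is continuous with ∫_{-1}^1 ψ dx = 0, ψ takes both positive and negative values, and there exist ξ_- ≤ ξ_+ in [-1,1] such that ψ < 0 on (ξ_-, ξ_+) and ψ > 0 on [-1,1] \ [ξ_-, ξ_+]. If additionally ∫_{-1}^1 x ψ(x) dx = 0, then ξ_- and ξ_+ are both interior points of (-1,1), i.e. ψ changes sign exactly twice, and ψ(1) > 0 and ψ(-1) > 0. -/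
/-!
Since `ψ` is orthogonal to `1` and `x`, it is orthogonal to every affine function. If `ξ₋` were the
left endpoint `-1`, then `ψ` would change sign only at `ξ₊`, so `(x - ξ₊) ψ x` would be continuous,
nonnegative and not identically zero, yet have integral `0`. The right endpoint is handled by the
reflection `x ↦ -x`, which preserves both moment conditions.
-/

open Set intervalIntegral

section Moments

variable {ψ : ℝ → ℝ} {a b : ℝ}

lemma integral_sub_mul_eq_zero_of_moments (hab : a ≤ b) (hψ : ContinuousOn ψ (Icc a b))
    (h0 : ∫ x in a..b, ψ x = 0) (h1 : ∫ x in a..b, x * ψ x = 0) (ξ : ℝ) :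
    ∫ x in a..b, (x - ξ) * ψ x = 0 := by
  simp_rw [sub_mul]
  have hxψ : ContinuousOn (fun x => x * ψ x) (Icc a b) := by fun_prop
  rw [integral_sub (hxψ.intervalIntegrable_of_Icc hab)
    ((hψ.intervalIntegrable_of_Icc hab).const_mul ξ), integral_const_mul, h0, h1]
  simp

lemma left_lt_of_moments_eq_zero (hab : a < b) (hψ : ContinuousOn ψ (Icc a b))
    (h0 : ∫ x in a..b, ψ x = 0) (h1 : ∫ x in a..b, x * ψ x = 0) {ξm ξp : ℝ}
    (hneg : ∀ x ∈ Ioo ξm ξp, ψ x < 0) (hpos : ∀ x ∈ Icc a b \ Icc ξm ξp, 0 < ψ x) :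
    a < ξm := by
  by_contra! hξm
  have hsign : ∀ x ∈ Ioc a b, x ≠ ξp → 0 < (x - ξp) * ψ x := by
    intro x hx hne
    rcases hne.lt_or_gt with hlt | hgt
    · exact mul_pos_of_neg_of_neg (sub_neg.2 hlt) (hneg x ⟨hξm.trans_lt hx.1, hlt⟩)
    · exact mul_pos (sub_pos.2 hgt) (hpos x ⟨Ioc_subset_Icc_self hx, fun h => h.2.not_gt hgt⟩)
  have hnonneg : ∀ x ∈ Ioc a b, 0 ≤ (x - ξp) * ψ x := by
    intro x hx
    rcases eq_or_ne x ξp with rfl | hne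
    · simp
    · exact (hsign x hx hne).le
  obtain ⟨c, hc, hcξ⟩ := ((Ioo_infinite hab).sdiff (finite_singleton ξp)).nonempty
  have hint_pos := integral_pos hab (by fun_prop) hnonneg
    ⟨c, Ioo_subset_Icc_self hc, hsign c (Ioo_subset_Ioc_self hc) hcξ⟩
  rw [integral_sub_mul_eq_zero_of_moments hab.le hψ h0 h1] at hint_pos
  exact hint_pos.false

lemma right_lt_of_moments_eq_zero (hab : a < b) (hψ : ContinuousOn ψ (Icc a b))
    (h0 : ∫ x in a..b, ψ x = 0) (h1 : ∫ x in a..b, x * ψ x = 0) {ξm ξp : ℝ}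
    (hneg : ∀ x ∈ Ioo ξm ξp, ψ x < 0) (hpos : ∀ x ∈ Icc a b \ Icc ξm ξp, 0 < ψ x) :
    ξp < b := by
  have hreflected := left_lt_of_moments_eq_zero (ψ := fun x => ψ (-x)) (ξm := -ξp) (ξp := -ξm)
    (neg_lt_neg hab) ?_ ?_ ?_ ?_ ?_
  · linarith
  · exact hψ.comp continuousOn_neg fun x hx => by simpa [← neg_Icc] using hx
  · simpa using h0
  · have hflip : ∀ x : ℝ, x * ψ (-x) = -((-x) * ψ (-x)) := fun x => by ring
    simp only [hflip, integral_neg, integral_comp_neg (fun y => y * ψ y), neg_neg, h1, neg_zero]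
  · intro x hx
    exact hneg (-x) (by simpa [← neg_Ioo] using hx)
  · intro x hx
    exact hpos (-x) (by simpa [← neg_Icc] using hx)

end Moments

theorem two_interior_zeros_general
    (ψ : ℝ → ℝ) (hψc : ContinuousOn ψ (Icc (-1:ℝ) 1))
    (hmean : ∫ x in (-1:ℝ)..1, ψ x = 0)
    (ξm ξp : ℝ)
    (hle : ξm ≤ ξp)
    (hneg : ∀ x ∈ Ioo ξm ξp, ψ x < 0)
    (hpos : ∀ x ∈ Icc (-1:ℝ) 1 \ Icc ξm ξp, 0 < ψ x)
    (hfirst : ∫ x in (-1:ℝ)..1, x * ψ x = 0) :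
    ξm ∈ Ioo (-1:ℝ) 1 ∧ ξp ∈ Ioo (-1:ℝ) 1 ∧ 0 < ψ 1 ∧ 0 < ψ (-1) := by
  have hab : (-1 : ℝ) < 1 := by norm_num
  have hm := left_lt_of_moments_eq_zero hab hψc hmean hfirst hneg hpos
  have hp := right_lt_of_moments_eq_zero hab hψc hmean hfirst hneg hpos
  refine ⟨⟨hm, hle.trans_lt hp⟩, ⟨hm.trans_le hle, hp⟩, ?_, ?_⟩
  · exact hpos 1 ⟨right_mem_Icc.2 hab.le, fun h => h.2.not_gt hp⟩
  · exact hpos (-1) ⟨left_mem_Icc.2 hab.le, fun h => h.1.not_gt hm⟩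

theorem two_interior_zeros
    (ψ : ℝ → ℝ) (hψc : ContinuousOn ψ (Icc (-1:ℝ) 1))
    (hmean : ∫ x in (-1:ℝ)..1, ψ x = 0)
    (hposval : ∃ x ∈ Icc (-1:ℝ) 1, 0 < ψ x)
    (hnegval : ∃ x ∈ Icc (-1:ℝ) 1, ψ x < 0)
    (ξm ξp : ℝ) (hξm : ξm ∈ Icc (-1:ℝ) 1) (hξp : ξp ∈ Icc (-1:ℝ) 1)
    (hle : ξm ≤ ξp)
    (hneg : ∀ x ∈ Ioo ξm ξp, ψ x < 0)
    (hpos : ∀ x ∈ Icc (-1:ℝ) 1 \ Icc ξm ξp, 0 < ψ x)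
    (hfirst : ∫ x in (-1:ℝ)..1, x * ψ x = 0) :
    ξm ∈ Ioo (-1:ℝ) 1 ∧ ξp ∈ Ioo (-1:ℝ) 1 ∧ 0 < ψ 1 ∧ 0 < ψ (-1) :=
  two_interior_zeros_general ψ hψc hmean ξm ξp hle hneg hpos hfirst
end

section
/- Let V be convex and continuous on [-1,1], not affine, and let ψ : [-1,1] → ℝ be continuous with ψ < 0 on (ξ_-, ξ_+) and ψ > 0 on [-1,1] \ [ξ_-, ξ_+] for some ξ_- < ξ_+. Let L be the affine function agreeing with V at ξ_- and ξ_+. Then ∫_{-1}^1 (V - L) ψ dx > 0. -/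
/-!
Subtracting the affine function `L` keeps convexity, so `g = V - L` is convex with zeros at
`ξ₋ < ξ₊`. By convexity `g ≤ 0` on `[ξ₋, ξ₊]` and, comparing slopes of secants, `g ≥ 0` outside.
This is exactly the sign pattern of `ψ`, so `g ψ ≥ 0`, with `g ψ > 0` wherever `g ≠ 0`; since `V`
is not affine such a point exists, and continuity makes the integral positive.
-/

open Set

namespace ConvexOn

variable {𝕜 : Type*} [Field 𝕜] [LinearOrder 𝕜] [IsStrictOrderedRing 𝕜] {s : Set 𝕜}
  {g ψ : 𝕜 → 𝕜} {x y z : 𝕜}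

lemma nonpos_of_mem_Icc_of_eq_zero (hg : ConvexOn 𝕜 s g) (hx : x ∈ s) (hy : y ∈ s)
    (hgx : g x = 0) (hgy : g y = 0) (hz : z ∈ Icc x y) : g z ≤ 0 := by
  simpa [hgx, hgy] using hg.le_max_of_mem_Icc hx hy hz

lemma nonneg_of_notMem_Ioo_of_eq_zero (hg : ConvexOn 𝕜 s g) (hx : x ∈ s) (hy : y ∈ s)
    (hxy : x < y) (hgx : g x = 0) (hgy : g y = 0) (hz : z ∈ s) (hzxy : z ∉ Ioo x y) :
    0 ≤ g z := by
  rcases le_or_gt z x with hzx | hxz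
  · rcases hzx.lt_or_eq with hzx | rfl
    · have hslope := hg.slope_mono_adjacent hz hy hzx hxy
      rw [hgx, hgy, sub_self, zero_div, zero_sub, div_le_iff₀ (sub_pos.2 hzx)] at hslope
      linarith
    · exact hgx.ge
  · have hyz : y ≤ z := not_lt.1 fun hzy => hzxy ⟨hxz, hzy⟩
    rcases hyz.lt_or_eq with hyz | rfl
    · have hslope := hg.slope_mono_adjacent hx hz hxy hyz
      rwa [hgx, hgy, sub_self, zero_div, sub_zero, le_div_iff₀ (sub_pos.2 hyz), zero_mul]
        at hslope
    · exact hgy.ge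

lemma mul_pos_of_sign_change (hg : ConvexOn 𝕜 s g) (hx : x ∈ s) (hy : y ∈ s)
    (hxy : x < y) (hgx : g x = 0) (hgy : g y = 0) (hψneg : ∀ z ∈ Ioo x y, ψ z < 0)
    (hψpos : ∀ z ∈ s \ Icc x y, 0 < ψ z) (hz : z ∈ s) (hgz : g z ≠ 0) : 0 < g z * ψ z := by
  by_cases hzxy : z ∈ Icc x y
  · have hzx : x ≠ z := by rintro rfl; exact hgz hgx
    have hzy : z ≠ y := by rintro rfl; exact hgz hgy
    exact mul_pos_of_neg_of_neg
      ((hg.nonpos_of_mem_Icc_of_eq_zero hx hy hgx hgy hzxy).lt_of_ne hgz)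
      (hψneg z ⟨hzxy.1.lt_of_ne hzx, hzxy.2.lt_of_ne hzy⟩)
  · exact mul_pos
      ((hg.nonneg_of_notMem_Ioo_of_eq_zero hx hy hxy hgx hgy hz
        fun h => hzxy (Ioo_subset_Icc_self h)).lt_of_ne' hgz)
      (hψpos z ⟨hz, hzxy⟩)

lemma mul_nonneg_of_sign_change (hg : ConvexOn 𝕜 s g) (hx : x ∈ s) (hy : y ∈ s)
    (hxy : x < y) (hgx : g x = 0) (hgy : g y = 0) (hψneg : ∀ z ∈ Ioo x y, ψ z < 0)
    (hψpos : ∀ z ∈ s \ Icc x y, 0 < ψ z) (hz : z ∈ s) : 0 ≤ g z * ψ z := by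
  by_cases hgz : g z = 0
  · simp [hgz]
  · exact (hg.mul_pos_of_sign_change hx hy hxy hgx hgy hψneg hψpos hz hgz).le

end ConvexOn

theorem convex_vs_linear_integral_positive
    (V : ℝ → ℝ) (hVconv : ConvexOn ℝ (Icc (-1:ℝ) 1) V)
    (hVc : ContinuousOn V (Icc (-1:ℝ) 1))
    (hVnotaff : ¬ ∃ a b : ℝ, ∀ x ∈ Icc (-1:ℝ) 1, V x = a * x + b)
    (ψ : ℝ → ℝ) (hψc : ContinuousOn ψ (Icc (-1:ℝ) 1))
    (ξm ξp : ℝ) (hξm : ξm ∈ Icc (-1:ℝ) 1) (hξp : ξp ∈ Icc (-1:ℝ) 1)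
    (hlt : ξm < ξp)
    (hneg : ∀ x ∈ Ioo ξm ξp, ψ x < 0)
    (hpos : ∀ x ∈ Icc (-1:ℝ) 1 \ Icc ξm ξp, 0 < ψ x)
    (a b : ℝ)
    (hLm : a * ξm + b = V ξm) (hLp : a * ξp + b = V ξp) :
    0 < ∫ x in (-1:ℝ)..1, (V x - (a * x + b)) * ψ x := by
  have hg : ConvexOn ℝ (Icc (-1:ℝ) 1) fun x => V x - (a * x + b) :=
    hVconv.sub ((LinearMap.mul ℝ ℝ a).concaveOn (convex_Icc _ _) |>.add_const b)
  have hgm : V ξm - (a * ξm + b) = 0 := sub_eq_zero.2 hLm.symm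
  have hgp : V ξp - (a * ξp + b) = 0 := sub_eq_zero.2 hLp.symm
  obtain ⟨x₀, hx₀, hVx₀⟩ : ∃ x ∈ Icc (-1:ℝ) 1, V x ≠ a * x + b := by
    push Not at hVnotaff
    exact hVnotaff a b
  refine intervalIntegral.integral_pos (by norm_num)
    ((hVc.sub (by fun_prop)).mul hψc)
    (fun x hx => hg.mul_nonneg_of_sign_change hξm hξp hlt hgm hgp hneg hpos
      (Ioc_subset_Icc_self hx))
    ⟨x₀, hx₀, hg.mul_pos_of_sign_change hξm hξp hlt hgm hgp hneg hpos hx₀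
      (sub_ne_zero.2 hVx₀)⟩
end

section
/- If (u, λ) is a C^2 solution of -u'' + a x u = λ u on [-1,1], then [x^2(u'(x)^2 + (λ - a x)u(x)^2) - 2x u(x) u'(x) + u(x)^2] evaluated from -1 to 1 equals 4λ ∫_{-1}^1 x u^2 dx - 5a ∫_{-1}^1 x^2 u^2 dx. -/
/-!
Multiplying the equation by the Pohozaev multiplier `2x²u' - 2xu` turns it into an exact
derivative: with `u'' = (a x - λ) u` the flux
`F = x² (u'² + (λ - a x) u²) - 2 x u u' + u²` satisfies `F' = 4 λ x u² - 5 a x² u²`,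
and the identity is the fundamental theorem of calculus for `F`.
-/

open Set intervalIntegral

def pohozaevFlux (a lam : ℝ) (u u' : ℝ → ℝ) (x : ℝ) : ℝ :=
  x ^ 2 * (u' x ^ 2 + (lam - a * x) * u x ^ 2) - 2 * x * u x * u' x + u x ^ 2

theorem hasDerivWithinAt_pohozaevFlux {a lam x : ℝ} {u u' u'' : ℝ → ℝ} {s : Set ℝ}
    (hu : HasDerivWithinAt u (u' x) s x) (hu' : HasDerivWithinAt u' (u'' x) s x)
    (heq : -u'' x + a * x * u x = lam * u x) :
    HasDerivWithinAt (pohozaevFlux a lam u u')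
      (4 * lam * (x * u x ^ 2) - 5 * a * (x ^ 2 * u x ^ 2)) s x := by
  have hx := hasDerivWithinAt_id x s
  have h := ((hx.pow 2).mul ((hu'.pow 2).add
      (((hasDerivWithinAt_const x s lam).sub ((hasDerivWithinAt_const x s a).mul hx)).mul
        (hu.pow 2)))).sub ((((hasDerivWithinAt_const x s 2).mul hx).mul hu).mul hu')
      |>.add (hu.pow 2)
  refine h.congr_deriv ?_
  simp only [id, Pi.add_apply, Pi.sub_apply, Pi.mul_apply, Pi.pow_apply]
  linear_combination (2 * x * u x - 2 * x ^ 2 * u' x) * heq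

theorem pohozaevFlux_sub_eq_integral {a lam s t : ℝ} {u u' u'' : ℝ → ℝ} (hst : s ≤ t)
    (hd1 : ∀ x ∈ Icc s t, HasDerivWithinAt u (u' x) (Icc s t) x)
    (hd2 : ∀ x ∈ Icc s t, HasDerivWithinAt u' (u'' x) (Icc s t) x)
    (heq : ∀ x ∈ Icc s t, -u'' x + a * x * u x = lam * u x) :
    pohozaevFlux a lam u u' t - pohozaevFlux a lam u u' s =
      4 * lam * (∫ x in s..t, x * u x ^ 2) - 5 * a * (∫ x in s..t, x ^ 2 * u x ^ 2) := by
  have hF (x) (hx : x ∈ Icc s t) :=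
    hasDerivWithinAt_pohozaevFlux (hd1 x hx) (hd2 x hx) (heq x hx)
  have hu : ContinuousOn u (Icc s t) := fun x hx => (hd1 x hx).continuousWithinAt
  have hmoment (n : ℕ) : IntervalIntegrable (fun x => x ^ n * u x ^ 2) MeasureTheory.volume s t :=
    ((continuous_pow n).continuousOn.mul (hu.pow 2)).intervalIntegrable_of_Icc hst
  have hmoment1 : IntervalIntegrable (fun x => x * u x ^ 2) MeasureTheory.volume s t := by
    simpa using hmoment 1
  have hdensity := (hmoment1.const_mul (4 * lam)).sub ((hmoment 2).const_mul (5 * a))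
  rw [← integral_const_mul, ← integral_const_mul,
    ← integral_sub (hmoment1.const_mul _) ((hmoment 2).const_mul _)]
  exact (integral_eq_sub_of_hasDerivAt_of_le hst (fun x hx => (hF x hx).continuousWithinAt)
    (fun x hx => (hF x (Ioo_subset_Icc_self hx)).hasDerivAt (Icc_mem_nhds hx.1 hx.2))
    hdensity).symm

theorem pohozaev_identity_two_general
    (a lam : ℝ) (u u' u'' : ℝ → ℝ)
    (hd1 : ∀ x ∈ Icc (-1:ℝ) 1, HasDerivWithinAt u (u' x) (Icc (-1:ℝ) 1) x)
    (hd2 : ∀ x ∈ Icc (-1:ℝ) 1, HasDerivWithinAt u' (u'' x) (Icc (-1:ℝ) 1) x)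
    (heq : ∀ x ∈ Icc (-1:ℝ) 1, -u'' x + a * x * u x = lam * u x) :
    ((1:ℝ) ^ 2 * (u' 1 ^ 2 + (lam - a * 1) * u 1 ^ 2) - 2 * 1 * u 1 * u' 1 + u 1 ^ 2)
      - ((-1:ℝ) ^ 2 * (u' (-1) ^ 2 + (lam - a * (-1)) * u (-1) ^ 2)
          - 2 * (-1) * u (-1) * u' (-1) + u (-1) ^ 2)
      = 4 * lam * (∫ x in (-1:ℝ)..1, x * (u x) ^ 2)
        - 5 * a * (∫ x in (-1:ℝ)..1, x ^ 2 * (u x) ^ 2) :=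
  pohozaevFlux_sub_eq_integral (by norm_num) hd1 hd2 heq

theorem pohozaev_identity_two
    (a lam : ℝ) (u u' u'' : ℝ → ℝ)
    (hd1 : ∀ x ∈ Icc (-1:ℝ) 1, HasDerivWithinAt u (u' x) (Icc (-1:ℝ) 1) x)
    (hd2 : ∀ x ∈ Icc (-1:ℝ) 1, HasDerivWithinAt u' (u'' x) (Icc (-1:ℝ) 1) x)
    (hu''c : ContinuousOn u'' (Icc (-1:ℝ) 1))
    (heq : ∀ x ∈ Icc (-1:ℝ) 1, -u'' x + a * x * u x = lam * u x) :
    ((1:ℝ) ^ 2 * (u' 1 ^ 2 + (lam - a * 1) * u 1 ^ 2) - 2 * 1 * u 1 * u' 1 + u 1 ^ 2)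
      - ((-1:ℝ) ^ 2 * (u' (-1) ^ 2 + (lam - a * (-1)) * u (-1) ^ 2)
          - 2 * (-1) * u (-1) * u' (-1) + u (-1) ^ 2)
      = 4 * lam * (∫ x in (-1:ℝ)..1, x * (u x) ^ 2)
        - 5 * a * (∫ x in (-1:ℝ)..1, x ^ 2 * (u x) ^ 2) :=
  pohozaev_identity_two_general a lam u u' u'' hd1 hd2 heq
end

section
/- For a > 0, let u_a > 0 be the first eigenfunction of -u'' + a x u = λ u on (-1,1) with Robin conditions u'(±1) = ∓α u(±1), with eigenvalue λ_0^a, and let u̅ > 0 be the first eigenfunction for a = 0 with eigenvalue λ_0^0. Assume x_1 := (λ_0^a - λ_0^0)/a ∈ (-1,1). Then the ratio u_a/u̅ is strictly monotonically decreasing on [-1,1]. -/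
open Set

theorem ratio_linear_over_free_decreasing
    (a α lam0a lam00 : ℝ) (ha : 0 < a)
    (ua ua' ua'' ub ub' ub'' : ℝ → ℝ)
    (hda1 : ∀ x ∈ Icc (-1:ℝ) 1, HasDerivWithinAt ua (ua' x) (Icc (-1:ℝ) 1) x)
    (hda2 : ∀ x ∈ Icc (-1:ℝ) 1, HasDerivWithinAt ua' (ua'' x) (Icc (-1:ℝ) 1) x)
    (hdb1 : ∀ x ∈ Icc (-1:ℝ) 1, HasDerivWithinAt ub (ub' x) (Icc (-1:ℝ) 1) x)
    (hdb2 : ∀ x ∈ Icc (-1:ℝ) 1, HasDerivWithinAt ub' (ub'' x) (Icc (-1:ℝ) 1) x)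
    (heqa : ∀ x ∈ Icc (-1:ℝ) 1, -ua'' x + a * x * ua x = lam0a * ua x)
    (heqb : ∀ x ∈ Icc (-1:ℝ) 1, -ub'' x = lam00 * ub x)
    (hbcaR : ua' 1 = -α * ua 1) (hbcaL : ua' (-1) = α * ua (-1))
    (hbcbR : ub' 1 = -α * ub 1) (hbcbL : ub' (-1) = α * ub (-1))
    (hposa : ∀ x ∈ Icc (-1:ℝ) 1, 0 < ua x)
    (hposb : ∀ x ∈ Icc (-1:ℝ) 1, 0 < ub x)
    (hx1 : (lam0a - lam00) / a ∈ Ioo (-1:ℝ) 1) :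
    StrictAntiOn (fun x => ua x / ub x) (Icc (-1:ℝ) 1) := by
  obtain ⟨hx1l, hx1r⟩ := hx1
  set x1 : ℝ := (lam0a - lam00) / a with hx1def
  set W : ℝ → ℝ := fun x => ua' x * ub x - ua x * ub' x with hWdef
  set W' : ℝ → ℝ := fun x => (a * x - lam0a + lam00) * (ua x * ub x) with hW'def
  have hWd : ∀ x ∈ Icc (-1:ℝ) 1, HasDerivWithinAt W (W' x) (Icc (-1:ℝ) 1) x := by
    intro x hx
    have h1 := (hda2 x hx).mul (hdb1 x hx)
    have h2 := (hda1 x hx).mul (hdb2 x hx)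
    have ea : ua'' x = a * x * ua x - lam0a * ua x := by linarith [heqa x hx]
    have eb : ub'' x = -(lam00 * ub x) := by linarith [heqb x hx]
    have hval : W' x = (ua'' x * ub x + ua' x * ub' x) - (ua' x * ub' x + ua x * ub'' x) := by
      simp only [hW'def, ea, eb]; ring
    rw [hval]
    exact h1.sub h2
  have hWc : ContinuousOn W (Icc (-1:ℝ) 1) := fun x hx => (hWd x hx).continuousWithinAt
  have hWL : W (-1) = 0 := by simp only [hWdef, hbcaL, hbcbL]; ring
  have hWR : W 1 = 0 := by simp only [hWdef, hbcaR, hbcbR]; ring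
  have hx1mem : x1 ∈ Icc (-1:ℝ) 1 := ⟨hx1l.le, hx1r.le⟩
  have hderivat : ∀ x ∈ Ioo (-1:ℝ) 1, HasDerivAt W (W' x) x := by
    intro x hx
    exact (hWd x (Ioo_subset_Icc_self hx)).hasDerivAt (Icc_mem_nhds hx.1 hx.2)
  -- W strictly decreasing on [-1, x1]
  have hanti : StrictAntiOn W (Icc (-1:ℝ) x1) := by
    apply strictAntiOn_of_deriv_neg (convex_Icc _ _)
      (hWc.mono (Icc_subset_Icc le_rfl hx1r.le))
    intro x hx
    rw [interior_Icc] at hx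
    have hx' : x ∈ Ioo (-1:ℝ) 1 := ⟨hx.1, hx.2.trans hx1r⟩
    rw [(hderivat x hx').deriv]
    have h1 : a * x - lam0a + lam00 < 0 := by
      have : a * x < a * x1 := by exact (mul_lt_mul_iff_right₀ ha).2 hx.2
      rw [hx1def] at this
      have := (mul_div_cancel₀ (lam0a - lam00) ha.ne').symm ▸ this
      nlinarith [mul_div_cancel₀ (lam0a - lam00) ha.ne']
    have h2 : 0 < ua x * ub x :=
      mul_pos (hposa x (Ioo_subset_Icc_self hx')) (hposb x (Ioo_subset_Icc_self hx'))
    exact mul_neg_of_neg_of_pos h1 h2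
  -- W strictly increasing on [x1, 1]
  have hmono : StrictMonoOn W (Icc x1 1) := by
    apply strictMonoOn_of_deriv_pos (convex_Icc _ _)
      (hWc.mono (Icc_subset_Icc hx1l.le le_rfl))
    intro x hx
    rw [interior_Icc] at hx
    have hx' : x ∈ Ioo (-1:ℝ) 1 := ⟨hx1l.trans hx.1, hx.2⟩
    rw [(hderivat x hx').deriv]
    have h1 : 0 < a * x - lam0a + lam00 := by
      have : a * x1 < a * x := (mul_lt_mul_iff_right₀ ha).2 hx.1
      nlinarith [mul_div_cancel₀ (lam0a - lam00) ha.ne']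
    have h2 : 0 < ua x * ub x :=
      mul_pos (hposa x (Ioo_subset_Icc_self hx')) (hposb x (Ioo_subset_Icc_self hx'))
    exact mul_pos h1 h2
  have hWneg : ∀ x ∈ Ioo (-1:ℝ) 1, W x < 0 := by
    intro x hx
    rcases le_or_gt x x1 with h | h
    · have := hanti (left_mem_Icc.2 (hx.1.le.trans h)) ⟨hx.1.le, h⟩ hx.1
      rwa [hWL] at this
    · have := hmono ⟨h.le, hx.2.le⟩ (right_mem_Icc.2 (h.le.trans hx.2.le)) hx.2
      rwa [hWR] at this
  -- ratio
  apply strictAntiOn_of_deriv_neg (convex_Icc _ _)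
  · exact ContinuousOn.div (fun x hx => (hda1 x hx).continuousWithinAt)
      (fun x hx => (hdb1 x hx).continuousWithinAt) (fun x hx => (hposb x hx).ne')
  · intro x hx
    rw [interior_Icc] at hx
    have hxI := Ioo_subset_Icc_self hx
    have hub : ub x ≠ 0 := (hposb x hxI).ne'
    have hda : HasDerivAt ua (ua' x) x :=
      (hda1 x hxI).hasDerivAt (Icc_mem_nhds hx.1 hx.2)
    have hdb : HasDerivAt ub (ub' x) x :=
      (hdb1 x hxI).hasDerivAt (Icc_mem_nhds hx.1 hx.2)
    have hdf : HasDerivAt (fun x => ua x / ub x)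
        ((ua' x * ub x - ua x * ub' x) / (ub x) ^ 2) x := hda.div hdb hub
    rw [hdf.deriv]
    exact div_neg_of_neg_of_pos (hWneg x hx) (by positivity)
end

section
/- For a > 0, let u_a > 0 be the first eigenfunction of -u'' + a x u = λ u on (-1,1) with Robin boundary conditions u'(±1) = ∓α u(±1). Then u_a(1)^2 < u_a(-1)^2. -/
/-!
Let `v x = u (-x)`, which solves the reflected equation `-v'' - a x v = λ v`. The Wronskian
`W = u v' - u' v` satisfies `W' = -2 a x u v`, and the Robin conditions make it vanish at `±1`.
So `W` increases on `[-1, 0]`, decreases on `[0, 1]`, and is positive inside. Since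
`(v / u)' = W / u²`, the quotient `v / u` is strictly increasing, and comparing its values
`u 1 / u (-1) < u (-1) / u 1` gives the claim.
-/

open Set

theorem HasDerivWithinAt.comp_neg {f : ℝ → ℝ} {f' x : ℝ} {s : Set ℝ}
    (hf : HasDerivWithinAt f f' s (-x)) :
    HasDerivWithinAt (fun y => f (-y)) (-f') (-s) x := by
  simpa [Function.comp_def] using
    hf.comp x (hasDerivWithinAt_neg x (-s)) fun y hy => Set.mem_neg.mp hy

theorem hasDerivWithinAt_wronskian {u v u' v' : ℝ → ℝ} {u₂ v₂ x : ℝ} {s : Set ℝ}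
    (hu : HasDerivWithinAt u (u' x) s x) (hu' : HasDerivWithinAt u' u₂ s x)
    (hv : HasDerivWithinAt v (v' x) s x) (hv' : HasDerivWithinAt v' v₂ s x) :
    HasDerivWithinAt (fun y => u y * v' y - u' y * v y) (u x * v₂ - u₂ * v x) s x :=
  ((hu.fun_mul hv').fun_sub (hu'.fun_mul hv)).congr_deriv (by ring)

section Icc

variable {f f' : ℝ → ℝ} {a b : ℝ}

theorem strictMonoOn_Icc_of_hasDerivWithinAt_pos
    (hf : ∀ x ∈ Icc a b, HasDerivWithinAt f (f' x) (Icc a b) x)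
    (hf' : ∀ x ∈ Ioo a b, 0 < f' x) : StrictMonoOn f (Icc a b) := by
  refine strictMonoOn_of_hasDerivWithinAt_pos (convex_Icc a b)
    (fun x hx => (hf x hx).continuousWithinAt) ?_ (by simpa only [interior_Icc] using hf')
  simp only [interior_Icc]
  exact fun x hx => (hf x (Ioo_subset_Icc_self hx)).mono Ioo_subset_Icc_self

theorem strictAntiOn_Icc_of_hasDerivWithinAt_neg
    (hf : ∀ x ∈ Icc a b, HasDerivWithinAt f (f' x) (Icc a b) x)
    (hf' : ∀ x ∈ Ioo a b, f' x < 0) : StrictAntiOn f (Icc a b) := by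
  refine strictAntiOn_of_hasDerivWithinAt_neg (convex_Icc a b)
    (fun x hx => (hf x hx).continuousWithinAt) ?_ (by simpa only [interior_Icc] using hf')
  simp only [interior_Icc]
  exact fun x hx => (hf x (Ioo_subset_Icc_self hx)).mono Ioo_subset_Icc_self

theorem pos_of_eq_zero_of_hasDerivWithinAt_pos_neg {c x : ℝ}
    (hf : ∀ x ∈ Icc a b, HasDerivWithinAt f (f' x) (Icc a b) x)
    (ha : f a = 0) (hb : f b = 0)
    (hf'_pos : ∀ y ∈ Ioo a c, 0 < f' y) (hf'_neg : ∀ y ∈ Ioo c b, f' y < 0)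
    (hx : x ∈ Ioo a b) : 0 < f x := by
  rcases le_or_gt x c with hxc | hcx
  · have hsub : Icc a x ⊆ Icc a b := Icc_subset_Icc_right hx.2.le
    have hmono := strictMonoOn_Icc_of_hasDerivWithinAt_pos
      (fun y hy => (hf y (hsub hy)).mono hsub)
      (fun y hy => hf'_pos y ⟨hy.1, hy.2.trans_le hxc⟩)
    simpa [ha] using hmono (left_mem_Icc.2 hx.1.le) (right_mem_Icc.2 hx.1.le) hx.1
  · have hsub : Icc x b ⊆ Icc a b := Icc_subset_Icc_left hx.1.le
    have hanti := strictAntiOn_Icc_of_hasDerivWithinAt_neg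
      (fun y hy => (hf y (hsub hy)).mono hsub)
      (fun y hy => hf'_neg y ⟨hcx.trans hy.1, hy.2⟩)
    simpa [hb] using hanti (left_mem_Icc.2 hx.2.le) (right_mem_Icc.2 hx.2.le) hx.2

theorem strictMonoOn_div_of_wronskian_pos {u v u' v' : ℝ → ℝ}
    (hu : ∀ x ∈ Icc a b, HasDerivWithinAt u (u' x) (Icc a b) x)
    (hv : ∀ x ∈ Icc a b, HasDerivWithinAt v (v' x) (Icc a b) x)
    (hu_ne : ∀ x ∈ Icc a b, u x ≠ 0) (hW : ∀ x ∈ Ioo a b, 0 < u x * v' x - u' x * v x) :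
    StrictMonoOn (fun x => v x / u x) (Icc a b) := by
  refine strictMonoOn_Icc_of_hasDerivWithinAt_pos
    (fun x hx => (hv x hx).div (hu x hx) (hu_ne x hx)) fun x hx => ?_
  have hux := hu_ne x (Ioo_subset_Icc_self hx)
  have hWx := hW x hx
  exact div_pos (by linarith) (by positivity)

end Icc

theorem first_eigenfunction_boundary_comparison
    (a α lam : ℝ) (ha : 0 < a)
    (u u' u'' : ℝ → ℝ)
    (hd1 : ∀ x ∈ Icc (-1:ℝ) 1, HasDerivWithinAt u (u' x) (Icc (-1:ℝ) 1) x)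
    (hd2 : ∀ x ∈ Icc (-1:ℝ) 1, HasDerivWithinAt u' (u'' x) (Icc (-1:ℝ) 1) x)
    (heq : ∀ x ∈ Icc (-1:ℝ) 1, -u'' x + a * x * u x = lam * u x)
    (hbcR : u' 1 = -α * u 1) (hbcL : u' (-1) = α * u (-1))
    (hpos : ∀ x ∈ Icc (-1:ℝ) 1, 0 < u x) :
    u 1 ^ 2 < u (-1) ^ 2 := by
  set I := Icc (-1:ℝ) 1
  have hI : -I = I := by simp [I, neg_Icc]
  have hnegI : ∀ x ∈ I, -x ∈ I := fun x hx => hI ▸ Set.neg_mem_neg.2 hx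
  have hv : ∀ x ∈ I, HasDerivWithinAt (fun y => u (-y)) (-u' (-x)) I x := fun x hx =>
    hI ▸ (hd1 (-x) (hnegI x hx)).comp_neg
  have hv' : ∀ x ∈ I, HasDerivWithinAt (fun y => -u' (-y)) (u'' (-x)) I x := fun x hx =>
    hI ▸ (hd2 (-x) (hnegI x hx)).comp_neg.fun_neg.congr_deriv (neg_neg _)
  have hW : ∀ x ∈ I, HasDerivWithinAt (fun y => u y * -u' (-y) - u' y * u (-y))
      (-2 * x * (a * (u x * u (-x)))) I x := fun x hx => by
    convert hasDerivWithinAt_wronskian (hd1 x hx) (hd2 x hx) (hv x hx) (hv' x hx) using 1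
    linear_combination u x * heq (-x) (hnegI x hx) - u (-x) * heq x hx
  have huv_pos : ∀ x ∈ Ioo (-1:ℝ) 1, 0 < a * (u x * u (-x)) := fun x hx =>
    have hxI := Ioo_subset_Icc_self hx
    mul_pos ha (mul_pos (hpos x hxI) (hpos _ (hnegI x hxI)))
  have hW_pos : ∀ x ∈ Ioo (-1:ℝ) 1, 0 < u x * -u' (-x) - u' x * u (-x) :=
    fun x => pos_of_eq_zero_of_hasDerivWithinAt_pos_neg (c := 0) hW
      (by simp only [neg_neg, hbcR, hbcL]; ring) (by simp only [hbcR, hbcL]; ring)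
      (fun y hy => mul_pos (by linarith [hy.2]) (huv_pos y ⟨hy.1, by linarith [hy.2]⟩))
      (fun y hy => mul_neg_of_neg_of_pos (by linarith [hy.1]) (huv_pos y ⟨by linarith [hy.1], hy.2⟩))
  have hmono := strictMonoOn_div_of_wronskian_pos hd1 hv (fun x hx => (hpos x hx).ne') hW_pos
  have hm1 : (-1:ℝ) ∈ I := left_mem_Icc.2 (by norm_num)
  have h1 : (1:ℝ) ∈ I := right_mem_Icc.2 (by norm_num)
  have hcmp := hmono hm1 h1 (by norm_num)
  simp only [neg_neg] at hcmp
  rw [div_lt_div_iff₀ (hpos _ hm1) (hpos _ h1)] at hcmp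
  simpa only [sq] using hcmp
end

section
/- Let λ_1 be the second eigenvalue of -u'' = λ u on (-1,1) with Robin conditions u'(±1) = ∓α u(±1), α ∈ ℝ. Then α^2 + λ_1 > 0. Consequently for the potential a x with a > 0, α^2 + λ_1^{ax} + a > 0, where λ_1^{ax} is the second Robin eigenvalue of -u'' + axu = λu, given λ_1^{ax} + a ≥ λ_1. -/
/-!
Suppose `α ^ 2 + λ ≤ 0`. For `-u'' = λ u` the energy `u' ^ 2 + λ u ^ 2` is constant; the Robin
condition makes it `(α ^ 2 + λ) u(1) ^ 2 ≤ 0` at `1`, while at the interior zero `x₀` it is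
`u'(x₀) ^ 2 ≥ 0`. So it vanishes identically, whence `|u'| ≤ √|λ| |u|`, and Grönwall's inequality
started at `u(x₀) = 0` forces `u = 0` on `[x₀, 1]`, contradicting that `x₀` is the only interior
zero of `u`.
-/

open Set

theorem abs_le_sqrt_abs_mul_abs_of_sq_add_mul_sq_eq_zero {p q c : ℝ} (h : p ^ 2 + c * q ^ 2 = 0) :
    |p| ≤ √|c| * |q| := by
  rw [← abs_of_nonneg (Real.sqrt_nonneg |c|), ← abs_mul, ← sq_le_sq, mul_pow,
    Real.sq_sqrt (abs_nonneg c)]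
  nlinarith [neg_abs_le c, sq_nonneg q]

section Oscillator

variable {a b lam : ℝ} {u u' u'' : ℝ → ℝ}

theorem sq_deriv_add_mul_sq_eq_of_neg_deriv2_eq
    (hd1 : ∀ x ∈ Icc a b, HasDerivWithinAt u (u' x) (Icc a b) x)
    (hd2 : ∀ x ∈ Icc a b, HasDerivWithinAt u' (u'' x) (Icc a b) x)
    (heq : ∀ x ∈ Icc a b, -u'' x = lam * u x) :
    ∀ x ∈ Icc a b, u' x ^ 2 + lam * u x ^ 2 = u' a ^ 2 + lam * u a ^ 2 := by
  have hu : ContinuousOn u (Icc a b) := fun x hx => (hd1 x hx).continuousWithinAt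
  have hu' : ContinuousOn u' (Icc a b) := fun x hx => (hd2 x hx).continuousWithinAt
  refine constant_of_has_deriv_right_zero (f := fun x => u' x ^ 2 + lam * u x ^ 2)
    ((hu'.pow 2).add (continuousOn_const.mul (hu.pow 2))) fun x hx => ?_
  have hx' := Ico_subset_Icc_self hx
  have hderiv := ((hd2 x hx').fun_pow 2).fun_add (((hd1 x hx').fun_pow 2).const_mul lam)
  convert hderiv.mono_of_mem_nhdsWithin (Icc_mem_nhdsGE_of_mem hx) using 1
  push_cast
  linear_combination (2 * u' x) * heq x hx'

theorem eq_zero_of_robin_right_of_sq_add_nonpos {α x₀ : ℝ}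
    (hd1 : ∀ x ∈ Icc a b, HasDerivWithinAt u (u' x) (Icc a b) x)
    (hd2 : ∀ x ∈ Icc a b, HasDerivWithinAt u' (u'' x) (Icc a b) x)
    (heq : ∀ x ∈ Icc a b, -u'' x = lam * u x) (hbc : u' b = -α * u b)
    (hx₀ : x₀ ∈ Icc a b) (hux₀ : u x₀ = 0) (hneg : α ^ 2 + lam ≤ 0) :
    ∀ x ∈ Icc x₀ b, u x = 0 := by
  have henergy := sq_deriv_add_mul_sq_eq_of_neg_deriv2_eq hd1 hd2 heq
  have hb : b ∈ Icc a b := right_mem_Icc.2 (hx₀.1.trans hx₀.2)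
  have hEb : u' b ^ 2 + lam * u b ^ 2 = (α ^ 2 + lam) * u b ^ 2 := by rw [hbc]; ring
  have hEx₀ : u' x₀ ^ 2 + lam * u x₀ ^ 2 = u' x₀ ^ 2 := by rw [hux₀]; ring
  have hzero : ∀ x ∈ Icc a b, u' x ^ 2 + lam * u x ^ 2 = 0 := fun x hx => by
    nlinarith [henergy x hx, henergy b hb, henergy x₀ hx₀, sq_nonneg (u' x₀),
      mul_nonpos_of_nonpos_of_nonneg hneg (sq_nonneg (u b))]
  have hsub : Icc x₀ b ⊆ Icc a b := Icc_subset_Icc_left hx₀.1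
  refine eq_zero_of_abs_deriv_le_mul_abs_self_of_eq_zero_right (f' := u') (K := √|lam|)
    (fun x hx => (hd1 x (hsub hx)).continuousWithinAt.mono hsub) (fun x hx => ?_) hux₀
    fun x hx => abs_le_sqrt_abs_mul_abs_of_sq_add_mul_sq_eq_zero
      (hzero x (hsub (Ico_subset_Icc_self hx)))
  exact (hd1 x (hsub (Ico_subset_Icc_self hx))).mono_of_mem_nhdsWithin
    (Icc_mem_nhdsGE_of_mem ⟨hx₀.1.trans hx.1, hx.2⟩)

end Oscillator

theorem second_eigenvalue_lower_bound_general
    (α lam1 : ℝ) (u u' u'' : ℝ → ℝ)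
    (hd1 : ∀ x ∈ Icc (-1:ℝ) 1, HasDerivWithinAt u (u' x) (Icc (-1:ℝ) 1) x)
    (hd2 : ∀ x ∈ Icc (-1:ℝ) 1, HasDerivWithinAt u' (u'' x) (Icc (-1:ℝ) 1) x)
    (heq : ∀ x ∈ Icc (-1:ℝ) 1, -u'' x = lam1 * u x)
    (hbcR : u' 1 = -α * u 1)
    -- u is a second eigenfunction: it has exactly one interior zero
    (x0 : ℝ) (hx0 : x0 ∈ Ioo (-1:ℝ) 1) (hx0z : u x0 = 0)
    (huniq : ∀ x ∈ Ioo (-1:ℝ) 1, u x = 0 → x = x0) :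
    0 < α ^ 2 + lam1 ∧
      ∀ a lam1ax : ℝ, 0 < a → lam1 ≤ lam1ax + a → 0 < α ^ 2 + lam1ax + a := by
  have hpos : 0 < α ^ 2 + lam1 := by
    by_contra! hneg
    have hmid : x0 < (x0 + 1) / 2 ∧ (x0 + 1) / 2 < 1 := by constructor <;> linarith [hx0.2]
    have hvanish := eq_zero_of_robin_right_of_sq_add_nonpos hd1 hd2 heq hbcR
      (Ioo_subset_Icc_self hx0) hx0z hneg _ ⟨hmid.1.le, hmid.2.le⟩
    linarith [huniq _ ⟨hx0.1.trans hmid.1, hmid.2⟩ hvanish]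
  exact ⟨hpos, fun a lam1ax _ hle => by linarith⟩

theorem second_eigenvalue_lower_bound
    (α lam1 : ℝ) (u u' u'' : ℝ → ℝ)
    (hd1 : ∀ x ∈ Icc (-1:ℝ) 1, HasDerivWithinAt u (u' x) (Icc (-1:ℝ) 1) x)
    (hd2 : ∀ x ∈ Icc (-1:ℝ) 1, HasDerivWithinAt u' (u'' x) (Icc (-1:ℝ) 1) x)
    (heq : ∀ x ∈ Icc (-1:ℝ) 1, -u'' x = lam1 * u x)
    (hbcR : u' 1 = -α * u 1) (hbcL : u' (-1) = α * u (-1))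
    (hne : ∃ x ∈ Icc (-1:ℝ) 1, u x ≠ 0)
    -- u is a second eigenfunction: it has exactly one interior zero
    (x0 : ℝ) (hx0 : x0 ∈ Ioo (-1:ℝ) 1) (hx0z : u x0 = 0)
    (huniq : ∀ x ∈ Ioo (-1:ℝ) 1, u x = 0 → x = x0) :
    0 < α ^ 2 + lam1 ∧
      ∀ a lam1ax : ℝ, 0 < a → lam1 ≤ lam1ax + a → 0 < α ^ 2 + lam1ax + a :=
  second_eigenvalue_lower_bound_general α lam1 u u' u'' hd1 hd2 heq hbcR x0 hx0 hx0z huniq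
end
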